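/- The quintuple (H(X,Ω), m, 1, Δ_λ, ε) is a k-bialgebra: H(X,Ω) is a unital associative algebra under concatenation, (H(X,Ω), Δ_λ, ε) is a coassociative counital coalgebra, and Δ_λ and ε are algebra homomorphisms. -/

import Mathlib

open scoped TensorProduct

universe u v w u'

/-- Decorated planar rooted trees: internal vertices are decorated by `Ω`,
leaves are decorated by `X ⊔ Ω` (a leaf decorated by `ω : Ω` is `node ω []`). -/
inductive PTree (X : Type u) (Ω : Type v) : Type (max u v)
  | leafX : X → PTree X Ω
  | node : Ω → List (PTree X Ω) → PTree X Ω

namespace Moerdijk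

variable {X : Type u} {Ω : Type v}

/-- `ℱ(X,Ω)`: decorated planar rooted forests, i.e. the free monoid on decorated
planar rooted trees under concatenation. -/
abbrev RForest (X : Type u) (Ω : Type v) := FreeMonoid (PTree X Ω)

/-- The single-vertex forest `•ₓ` for `x ∈ X`. -/
def leafF (x : X) : RForest X Ω := FreeMonoid.of (PTree.leafX x)

/-- Grafting of a forest onto a new common root decorated by `ω`. -/
def graft (ω : Ω) (F : RForest X Ω) : RForest X Ω :=
  FreeMonoid.of (PTree.node ω (FreeMonoid.toList F))

variable (k : Type w) [CommRing k]

/-- `H(X,Ω)`: the free `k`-module on decorated planar rooted forests, a unital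
associative algebra under the concatenation product. -/
abbrev RAlg (X : Type u) (Ω : Type v) := MonoidAlgebra k (RForest X Ω)

/-- The basis element of `H(X,Ω)` corresponding to a forest `F`. -/
noncomputable def ofF (F : RForest X Ω) : RAlg k X Ω := MonoidAlgebra.of k (RForest X Ω) F

/-- The grafting operator `B⁺_ω : H(X,Ω) → H(X,Ω)` as a linear map. -/
noncomputable def Bplus (ω : Ω) : RAlg k X Ω →ₗ[k] RAlg k X Ω :=
  MonoidAlgebra.mapDomainLinearMap k k (graft ω)

/-- The value of the coproduct `Δ_λ` on a decorated planar rooted tree: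
`Δ_λ(•ₓ) = •ₓ ⊗ 1 + 1 ⊗ •ₓ + λ •ₓ ⊗ •ₓ` and
`Δ_λ(B⁺_ω(F)) = (B⁺_ω ⊗ id)Δ_λ(F) + (id ⊗ B⁺_ω)Δ_λ(F)`. -/
noncomputable def DeltaT (lam : k) : PTree X Ω → (RAlg k X Ω ⊗[k] RAlg k X Ω)
  | .leafX x =>
      ofF k (leafF x) ⊗ₜ[k] 1 + 1 ⊗ₜ[k] ofF k (leafF x)
        + lam • (ofF k (leafF x) ⊗ₜ[k] ofF k (leafF x))
  | .node ω ts =>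
      ((TensorProduct.map (Bplus k ω) LinearMap.id
        + TensorProduct.map LinearMap.id (Bplus k ω) :
          (RAlg k X Ω ⊗[k] RAlg k X Ω) →ₗ[k] (RAlg k X Ω ⊗[k] RAlg k X Ω)))
        ((ts.attach.map fun t => DeltaT lam t.1).prod)
decreasing_by
  have := List.sizeOf_lt_of_mem t.2
  simp only [PTree.node.sizeOf_spec]
  omega

/-- The value of the coproduct `Δ_λ` on a forest: `Δ_λ(T₁⋯Tₘ) = Δ_λ(T₁)⋯Δ_λ(Tₘ)`. -/
noncomputable def DeltaF (lam : k) (F : RForest X Ω) : RAlg k X Ω ⊗[k] RAlg k X Ω :=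
  ((FreeMonoid.toList F).map (DeltaT k lam)).prod

/-- The coproduct `Δ_λ : H(X,Ω) → H(X,Ω) ⊗ H(X,Ω)`. -/
noncomputable def Delta (lam : k) : RAlg k X Ω →ₗ[k] (RAlg k X Ω ⊗[k] RAlg k X Ω) :=
  (Finsupp.lsum k fun F => LinearMap.toSpanSingleton k _ (DeltaF k lam F)) ∘ₗ
    (MonoidAlgebra.coeffLinearEquiv k).toLinearMap

/-- The counit `ε : H(X,Ω) → k`, sending the empty forest to `1` and every
nonempty forest to `0`. -/
noncomputable def eps : RAlg k X Ω →ₗ[k] k :=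
  (Finsupp.lsum k fun F => LinearMap.toSpanSingleton k k
    (if (FreeMonoid.toList F).isEmpty then (1 : k) else 0)) ∘ₗ
    (MonoidAlgebra.coeffLinearEquiv k).toLinearMap


/-!
`Δ_λ` and `ε` are the algebra maps induced by their values on trees, so both sides of each
coalgebra identity are algebra maps out of `H(X,Ω)` and it suffices to compare them on forests
built from trees. By construction `B⁺_ω` is a coderivation,
`Δ_λ ∘ B⁺_ω = (B⁺_ω ⊗ id + id ⊗ B⁺_ω) ∘ Δ_λ`, and `ε ∘ B⁺_ω = 0`. Hence both sides of
coassociativity intertwine `B⁺_ω` with `B⁺_ω ⊗ id ⊗ id + id ⊗ B⁺_ω ⊗ id + id ⊗ id ⊗ B⁺_ω`, and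
both sides of each counit law intertwine `B⁺_ω` with itself, so induction on trees reduces
everything to the single vertices `•ₓ`, where it is a direct computation.
-/

section Coderivation

variable {R M : Type*} [CommSemiring R] [AddCommMonoid M] [Module R M]
  {D : M →ₗ[R] M ⊗[R] M} {B : M →ₗ[R] M}

theorem assoc_rTensor_comp_of_coderivation
    (hB : D ∘ₗ B = (B.rTensor M + B.lTensor M) ∘ₗ D) :
    ((TensorProduct.assoc R M M M).toLinearMap ∘ₗ D.rTensor M) ∘ₗ (B.rTensor M + B.lTensor M)
      = (B.rTensor (M ⊗[R] M) + (B.rTensor M).lTensor M + (B.lTensor M).lTensor M) ∘ₗ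
          (TensorProduct.assoc R M M M).toLinearMap ∘ₗ D.rTensor M := by
  refine TensorProduct.ext' fun a b => ?_
  have hBa : D (B a) = (B.rTensor M + B.lTensor M) (D a) := LinearMap.congr_fun hB a
  simp only [LinearMap.comp_apply, LinearMap.add_apply, LinearMap.rTensor_tmul,
    LinearMap.lTensor_tmul, map_add, hBa, TensorProduct.add_tmul]
  induction D a using TensorProduct.induction_on with
  | zero => simp
  | tmul c d =>
    simp only [LinearMap.rTensor_tmul, LinearMap.lTensor_tmul, LinearEquiv.coe_coe,
      TensorProduct.assoc_tmul]
  | add z w hz hw =>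
    simp only [map_add, TensorProduct.add_tmul]
    convert congrArg₂ (· + ·) hz hw using 1 <;> abel

theorem lTensor_comp_of_coderivation
    (hB : D ∘ₗ B = (B.rTensor M + B.lTensor M) ∘ₗ D) :
    D.lTensor M ∘ₗ (B.rTensor M + B.lTensor M)
      = (B.rTensor (M ⊗[R] M) + (B.rTensor M).lTensor M + (B.lTensor M).lTensor M) ∘ₗ
          D.lTensor M := by
  refine TensorProduct.ext' fun a b => ?_
  have hBb : D (B b) = (B.rTensor M + B.lTensor M) (D b) := LinearMap.congr_fun hB b
  simp only [LinearMap.comp_apply, LinearMap.add_apply, LinearMap.rTensor_tmul,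
    LinearMap.lTensor_tmul, map_add, hBb, TensorProduct.tmul_add]
  induction D b using TensorProduct.induction_on with
  | zero => simp
  | tmul c d =>
    simp only [LinearMap.rTensor_tmul, LinearMap.lTensor_tmul, add_assoc]
  | add z w hz hw =>
    simp only [map_add, TensorProduct.tmul_add]
    convert congrArg₂ (· + ·) hz hw using 1 <;> abel

variable {e : M →ₗ[R] R}

theorem lid_rTensor_comp_of_comp_eq_zero (he : e ∘ₗ B = 0) :
    ((TensorProduct.lid R M).toLinearMap ∘ₗ e.rTensor M) ∘ₗ (B.rTensor M + B.lTensor M)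
      = B ∘ₗ (TensorProduct.lid R M).toLinearMap ∘ₗ e.rTensor M := by
  refine TensorProduct.ext' fun a b => ?_
  have hBa : e (B a) = 0 := LinearMap.congr_fun he a
  simp [hBa]

theorem rid_lTensor_comp_of_comp_eq_zero (he : e ∘ₗ B = 0) :
    ((TensorProduct.rid R M).toLinearMap ∘ₗ e.lTensor M) ∘ₗ (B.rTensor M + B.lTensor M)
      = B ∘ₗ (TensorProduct.rid R M).toLinearMap ∘ₗ e.lTensor M := by
  refine TensorProduct.ext' fun a b => ?_
  have hBb : e (B b) = 0 := LinearMap.congr_fun he b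
  simp [hBb]

end Coderivation

theorem RForest.induction {P : RForest X Ω → Prop} (one : P 1)
    (mul : ∀ F G, P F → P G → P (F * G)) (leaf : ∀ x, P (leafF x))
    (graft : ∀ ω F, P F → P (graft ω F)) (F : RForest X Ω) : P F :=
  PTree.rec_1 (motive_1 := fun T => P (.of T)) (motive_2 := fun ts => P (.ofList ts))
    leaf (fun ω _ h => graft ω _ h) one (fun _ _ ht hts => mul _ _ ht hts) F.toList

theorem ofF_mul (F G : RForest X Ω) : ofF k (F * G) = ofF k F * ofF k G :=
  (MonoidAlgebra.of k (RForest X Ω)).map_mul F G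

theorem Bplus_ofF (ω : Ω) (F : RForest X Ω) : Bplus k ω (ofF k F) = ofF k (graft ω F) :=
  MonoidAlgebra.mapDomainLinearMap_single ..

theorem algHom_ext_of_comp_Bplus {A : Type*} [Semiring A] [Algebra k A]
    {φ ψ : RAlg k X Ω →ₐ[k] A} (leaf : ∀ x, φ (ofF k (leafF x)) = ψ (ofF k (leafF x)))
    (N : Ω → A →ₗ[k] A) (hφ : ∀ ω, φ.toLinearMap ∘ₗ Bplus k ω = N ω ∘ₗ φ.toLinearMap)
    (hψ : ∀ ω, ψ.toLinearMap ∘ₗ Bplus k ω = N ω ∘ₗ ψ.toLinearMap) : φ = ψ := by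
  suffices h : ∀ F, φ (ofF k F) = ψ (ofF k F) from
    MonoidAlgebra.algHom_ext h (Subsingleton.elim _ _)
  intro F
  induction F using RForest.induction with
  | one => exact (map_one φ).trans (map_one ψ).symm
  | mul F G hF hG => rw [ofF_mul, map_mul, map_mul, hF, hG]
  | leaf x => exact leaf x
  | graft ω F hF =>
    calc φ (ofF k (graft ω F)) = N ω (φ (ofF k F)) := by
          rw [← Bplus_ofF]; exact congr($(hφ ω) _)
      _ = N ω (ψ (ofF k F)) := by rw [hF]
      _ = ψ (ofF k (graft ω F)) := by rw [← Bplus_ofF]; exact congr($(hψ ω) _).symm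

theorem Delta_single (lam : k) (F : RForest X Ω) (c : k) :
    Delta k lam (MonoidAlgebra.single F c) = c • DeltaF k lam F := by
  simp [Delta]

theorem DeltaF_of (lam : k) (T : PTree X Ω) : DeltaF k lam (.of T) = DeltaT k lam T := by
  simp [DeltaF]

theorem DeltaF_graft (lam : k) (ω : Ω) (F : RForest X Ω) :
    DeltaF k lam (graft ω F) =
      (Bplus k ω).rTensor _ (DeltaF k lam F) + (Bplus k ω).lTensor _ (DeltaF k lam F) := by
  rw [graft, DeltaF_of, DeltaT, List.attach_map_val]
  rfl

theorem Delta_comp_Bplus (lam : k) (ω : Ω) :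
    Delta k lam ∘ₗ Bplus k ω =
      ((Bplus k ω).rTensor (RAlg k X Ω) + (Bplus k ω).lTensor (RAlg k X Ω)) ∘ₗ Delta k lam := by
  refine MonoidAlgebra.lhom_ext' fun F => LinearMap.ext fun c => ?_
  simp [Bplus, Delta_single, DeltaF_graft]

theorem Delta_ofF_leafF (lam : k) (x : X) :
    Delta k lam (ofF k (leafF x)) =
      ofF k (leafF x) ⊗ₜ[k] (1 : RAlg k X Ω) + (1 : RAlg k X Ω) ⊗ₜ[k] ofF k (leafF x)
        + lam • (ofF k (leafF x) ⊗ₜ[k] ofF k (leafF x)) := by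
  change Delta k lam (MonoidAlgebra.single _ 1) = _
  rw [Delta_single, one_smul, leafF, DeltaF_of, DeltaT]
  rfl

noncomputable def DeltaAlgHom (lam : k) : RAlg k X Ω →ₐ[k] RAlg k X Ω ⊗[k] RAlg k X Ω :=
  MonoidAlgebra.lift k _ (RForest X Ω) (FreeMonoid.lift (DeltaT k lam))

theorem toLinearMap_DeltaAlgHom (lam : k) :
    (DeltaAlgHom k lam (X := X) (Ω := Ω)).toLinearMap = Delta k lam :=
  MonoidAlgebra.lhom_ext' fun F => LinearMap.ext fun c => by
    simp [DeltaAlgHom, Delta_single, DeltaF, FreeMonoid.lift_apply]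

theorem eps_single (F : RForest X Ω) (c : k) :
    eps k (MonoidAlgebra.single F c) = c * if (FreeMonoid.toList F).isEmpty then 1 else 0 := by
  simp [eps]

theorem eps_comp_Bplus (ω : Ω) : eps k ∘ₗ Bplus k ω = (0 : RAlg k X Ω →ₗ[k] k) :=
  MonoidAlgebra.lhom_ext' fun F => LinearMap.ext fun c => by simp [Bplus, eps_single, graft]

theorem eps_ofF_leafF (x : X) : eps k (ofF k (leafF x : RForest X Ω)) = 0 := by
  simp [ofF, eps_single, leafF]

noncomputable def epsAlgHom : RAlg k X Ω →ₐ[k] k :=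
  MonoidAlgebra.lift k k (RForest X Ω) (FreeMonoid.lift fun _ => 0)

theorem toLinearMap_epsAlgHom : (epsAlgHom k).toLinearMap = eps k (X := X) (Ω := Ω) :=
  MonoidAlgebra.lhom_ext' fun F => LinearMap.ext fun c => by
    cases h : F.toList <;> simp [epsAlgHom, eps_single, FreeMonoid.lift_apply, h]

theorem Delta_mul (lam : k) (x y : RAlg k X Ω) :
    Delta k lam (x * y) = Delta k lam x * Delta k lam y := by
  simp only [← toLinearMap_DeltaAlgHom, AlgHom.toLinearMap_apply, map_mul]

theorem Delta_one (lam : k) : Delta k lam (1 : RAlg k X Ω) = 1 := by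
  simp only [← toLinearMap_DeltaAlgHom, AlgHom.toLinearMap_apply, map_one]

theorem eps_mul (x y : RAlg k X Ω) : eps k (x * y) = eps k x * eps k y := by
  simp only [← toLinearMap_epsAlgHom, AlgHom.toLinearMap_apply, map_mul]

theorem eps_one : eps k (1 : RAlg k X Ω) = 1 := by
  simp only [← toLinearMap_epsAlgHom, AlgHom.toLinearMap_apply, map_one]

section Coalgebra

variable (lam : k)
local notation "H" => RAlg k X Ω
local notation "Δ" => DeltaAlgHom k lam (X := X) (Ω := Ω)

theorem comp_Delta_comp_Bplus {P : Type*} [AddCommMonoid P] [Module k P] (ω : Ω)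
    {G : H ⊗[k] H →ₗ[k] P} {N : P →ₗ[k] P}
    (hG : G ∘ₗ ((Bplus k ω).rTensor H + (Bplus k ω).lTensor H) = N ∘ₗ G) :
    (G ∘ₗ Delta k lam) ∘ₗ Bplus k ω = N ∘ₗ G ∘ₗ Delta k lam := by
  rw [LinearMap.comp_assoc, Delta_comp_Bplus, ← LinearMap.comp_assoc, hG, LinearMap.comp_assoc]

open TensorProduct in
theorem Delta_coassoc :
    (TensorProduct.assoc k H H H).toLinearMap ∘ₗ (Delta k lam).rTensor H ∘ₗ Delta k lam =
      (Delta k lam).lTensor H ∘ₗ Delta k lam := by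
  set φ := (Algebra.TensorProduct.assoc k k k H H H).toAlgHom.comp
    ((Algebra.TensorProduct.map Δ (AlgHom.id k H)).comp Δ)
  set ψ := (Algebra.TensorProduct.map (AlgHom.id k H) Δ).comp Δ
  have hφ : φ.toLinearMap =
      (TensorProduct.assoc k H H H).toLinearMap ∘ₗ (Delta k lam).rTensor H ∘ₗ Delta k lam := by
    rw [← toLinearMap_DeltaAlgHom]; rfl
  have hψ : ψ.toLinearMap = (Delta k lam).lTensor H ∘ₗ Delta k lam := by
    rw [← toLinearMap_DeltaAlgHom]; rfl
  rw [← hφ, ← hψ]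
  congr 1
  refine algHom_ext_of_comp_Bplus k (fun x => ?_)
    (fun ω => (Bplus k ω).rTensor (H ⊗[k] H) + ((Bplus k ω).rTensor H).lTensor H
      + ((Bplus k ω).lTensor H).lTensor H) (fun ω => ?_) (fun ω => ?_)
  · rw [← AlgHom.toLinearMap_apply, ← AlgHom.toLinearMap_apply, hφ, hψ]
    simp only [LinearMap.comp_apply, Delta_ofF_leafF, map_add, map_smul, LinearMap.rTensor_tmul,
      LinearMap.lTensor_tmul, Delta_one, Algebra.TensorProduct.one_def, add_tmul, tmul_add,
      ← smul_tmul', tmul_smul, smul_add, LinearEquiv.coe_coe, assoc_tmul]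
    module
  · rw [hφ]
    exact comp_Delta_comp_Bplus k lam ω
      (assoc_rTensor_comp_of_coderivation (Delta_comp_Bplus k lam ω))
  · rw [hψ]
    exact comp_Delta_comp_Bplus k lam ω (lTensor_comp_of_coderivation (Delta_comp_Bplus k lam ω))

theorem Delta_counit_left :
    (TensorProduct.lid k H).toLinearMap ∘ₗ (eps k).rTensor H ∘ₗ Delta k lam = LinearMap.id := by
  set φ := (Algebra.TensorProduct.lid k H).toAlgHom.comp
    ((Algebra.TensorProduct.map (epsAlgHom k) (AlgHom.id k H)).comp Δ)
  have hφ : φ.toLinearMap =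
      (TensorProduct.lid k H).toLinearMap ∘ₗ (eps k).rTensor H ∘ₗ Delta k lam := by
    rw [← toLinearMap_DeltaAlgHom, ← toLinearMap_epsAlgHom]; rfl
  rw [← hφ, ← AlgHom.toLinearMap_id]
  congr 1
  refine algHom_ext_of_comp_Bplus k (fun x => ?_) (Bplus k) (fun ω => ?_) (fun ω => rfl)
  · rw [← AlgHom.toLinearMap_apply, hφ]
    simp [Delta_ofF_leafF, eps_ofF_leafF, eps_one]
  · rw [hφ]
    exact comp_Delta_comp_Bplus k lam ω (lid_rTensor_comp_of_comp_eq_zero (eps_comp_Bplus k ω))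

theorem Delta_counit_right :
    (TensorProduct.rid k H).toLinearMap ∘ₗ (eps k).lTensor H ∘ₗ Delta k lam = LinearMap.id := by
  set φ := (Algebra.TensorProduct.rid k k H).toAlgHom.comp
    ((Algebra.TensorProduct.map (AlgHom.id k H) (epsAlgHom k)).comp Δ)
  have hφ : φ.toLinearMap =
      (TensorProduct.rid k H).toLinearMap ∘ₗ (eps k).lTensor H ∘ₗ Delta k lam := by
    rw [← toLinearMap_DeltaAlgHom, ← toLinearMap_epsAlgHom]; rfl
  rw [← hφ, ← AlgHom.toLinearMap_id]
  congr 1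
  refine algHom_ext_of_comp_Bplus k (fun x => ?_) (Bplus k) (fun ω => ?_) (fun ω => rfl)
  · rw [← AlgHom.toLinearMap_apply, hφ]
    simp [Delta_ofF_leafF, eps_ofF_leafF, eps_one]
  · rw [hφ]
    exact comp_Delta_comp_Bplus k lam ω (rid_lTensor_comp_of_comp_eq_zero (eps_comp_Bplus k ω))

end Coalgebra

theorem bialgebra_structure (lam : k) :
    -- coassociativity
    ((TensorProduct.assoc k (RAlg k X Ω) (RAlg k X Ω) (RAlg k X Ω)).toLinearMap ∘ₗ
        TensorProduct.map (Delta k lam) LinearMap.id ∘ₗ Delta k lam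
      = TensorProduct.map LinearMap.id (Delta k lam) ∘ₗ Delta k lam) ∧
    -- counit laws
    ((TensorProduct.lid k (RAlg k X Ω)).toLinearMap ∘ₗ
        TensorProduct.map (eps k) LinearMap.id ∘ₗ Delta k lam
      = (LinearMap.id : RAlg k X Ω →ₗ[k] RAlg k X Ω)) ∧
    ((TensorProduct.rid k (RAlg k X Ω)).toLinearMap ∘ₗ
        TensorProduct.map LinearMap.id (eps k) ∘ₗ Delta k lam
      = (LinearMap.id : RAlg k X Ω →ₗ[k] RAlg k X Ω)) ∧
    -- `Δ_λ` is an algebra homomorphism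
    (∀ x y : RAlg k X Ω, Delta k lam (x * y) = Delta k lam x * Delta k lam y) ∧
    (Delta k lam (1 : RAlg k X Ω) = 1) ∧
    -- `ε` is an algebra homomorphism
    (∀ x y : RAlg k X Ω, eps k (x * y) = eps k x * eps k y) ∧
    (eps k (1 : RAlg k X Ω) = 1) :=
  ⟨Delta_coassoc k lam, Delta_counit_left k lam, Delta_counit_right k lam,
    Delta_mul k lam, Delta_one k lam, eps_mul k, eps_one k⟩

end Moerdijk
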